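/- arXiv:math/0504401 — 3 statements merged into one kernel-verified Lean document; each statement's English description precedes it below -/
import Mathlib

section
/- If w is a primitive element of the free group F(x,y) (i.e., w is the image of x under some automorphism of F(x,y)), and (X, Y) is its exponent sum pair (X the exponent sum of x in w, Y the exponent sum of y in w), then X and Y are relatively prime. -/
abbrev F2 := FreeGroup (Fin 2)

/-- The generator `x` of the free group of rank 2. -/
def xg : F2 := FreeGroup.of 0

/-- The generator `y` of the free group of rank 2. -/
def yg : F2 := FreeGroup.of 1

/-- The exponent sum of the `i`-th generator in a word `w`. -/
def expSum (i : Fin 2) (w : F2) : ℤ :=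
  Multiplicative.toAdd
    ((FreeGroup.lift fun j => Multiplicative.ofAdd (if j = i then (1 : ℤ) else 0)) w)

/-- An element is primitive if it is the image of `x` under an automorphism. -/
def IsPrimitive (w : F2) : Prop := ∃ θ : F2 ≃* F2, θ xg = w

/-- A palindrome: the reduced word reads the same forwards and backwards. -/
def IsPalindrome (w : F2) : Prop := w.toWord.reverse = w.toWord

/-- Only positive exponents appear in the reduced word of `w`. -/
def PosWord (w : F2) : Prop := ∀ l ∈ w.toWord, l.2 = true

lemma expSum_mul (i : Fin 2) (u v : F2) :
    expSum i (u * v) = expSum i u + expSum i v := by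
  simp [expSum]

lemma expSum_one (i : Fin 2) : expSum i 1 = 0 := by simp [expSum]

lemma expSum_inv (i : Fin 2) (u : F2) : expSum i u⁻¹ = -expSum i u := by
  simp [expSum]

lemma expSum_of (i j : Fin 2) :
    expSum i (FreeGroup.of j) = if j = i then 1 else 0 := by
  simp [expSum]

lemma key (g : F2 →* Multiplicative ℤ) (w : F2) :
    Multiplicative.toAdd (g w) =
      Multiplicative.toAdd (g xg) * expSum 0 w +
      Multiplicative.toAdd (g yg) * expSum 1 w := by
  induction w using FreeGroup.induction_on with
  | C1 => simp [expSum_one]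
  | of j =>
      have hp : (pure j : F2) = FreeGroup.of j := rfl
      fin_cases j <;> simp [expSum_of, xg, yg]
  | inv_of j ih => simp only [map_inv, toAdd_inv, expSum_inv] at *; linarith
  | mul u v ihu ihv => simp only [map_mul, toAdd_mul, expSum_mul] at *; ring_nf; linarith

theorem primitive_exponent_sums_coprime (w : F2) (hw : IsPrimitive w) :
    Int.gcd (expSum 0 w) (expSum 1 w) = 1 := by
  obtain ⟨θ, hθ⟩ := hw
  set e0 : F2 →* Multiplicative ℤ :=
    FreeGroup.lift fun j => Multiplicative.ofAdd (if j = (0 : Fin 2) then (1 : ℤ) else 0)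
  set g : F2 →* Multiplicative ℤ := e0.comp θ.symm.toMonoidHom with hg
  have h1 : Multiplicative.toAdd (g w) = 1 := by
    have : g w = e0 xg := by
      simp [hg, ← hθ]
    rw [this]
    have : Multiplicative.toAdd (e0 xg) = expSum 0 xg := rfl
    rw [this, xg, expSum_of]
    simp
  have h2 := key g w
  rw [h1] at h2
  rw [← Int.isCoprime_iff_gcd_eq_one]
  exact ⟨Multiplicative.toAdd (g xg), Multiplicative.toAdd (g yg), by linarith⟩
end

section
/- If r ∈ F(x,y) has exponent sum pair (0, 0), then r lies in the normal closure of every primitive element of F(x,y). -/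
/-- Any hom to `Multiplicative ℤ` kills an element with both exponent sums zero. -/
lemma hom_eq_one_of_expSum_zero (r : F2) (hA : expSum 0 r = 0) (hB : expSum 1 r = 0)
    (f : F2 →* Multiplicative ℤ) : f r = 1 := by
  set e0 : F2 →* Multiplicative ℤ :=
    FreeGroup.lift fun j => Multiplicative.ofAdd (if j = 0 then (1 : ℤ) else 0) with he0
  set e1 : F2 →* Multiplicative ℤ :=
    FreeGroup.lift fun j => Multiplicative.ofAdd (if j = 1 then (1 : ℤ) else 0) with he1
  have h0 : e0 r = 1 := by
    have : Multiplicative.toAdd (e0 r) = 0 := hA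
    simpa using this
  have h1 : e1 r = 1 := by
    have : Multiplicative.toAdd (e1 r) = 0 := hB
    simpa using this
  -- f = (combination of e0, e1)
  let a : ℤ := Multiplicative.toAdd (f xg)
  let b : ℤ := Multiplicative.toAdd (f yg)
  let g : F2 →* Multiplicative ℤ :=
    { toFun := fun w => Multiplicative.ofAdd
        (a * Multiplicative.toAdd (e0 w) + b * Multiplicative.toAdd (e1 w))
      map_one' := by simp
      map_mul' := by
        intro x y
        simp [toAdd_mul, mul_add, ← ofAdd_add]
        ring_nf }
  have hfg : f = g := by
    apply FreeGroup.ext_hom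
    intro i
    fin_cases i
    · show f xg = g xg
      simp only [g, MonoidHom.coe_mk, OneHom.coe_mk]
      have : e0 xg = Multiplicative.ofAdd (1 : ℤ) := by
        simp [he0, xg, FreeGroup.lift_apply_of]
      have h1' : e1 xg = Multiplicative.ofAdd (0 : ℤ) := by
        simp [he1, xg, FreeGroup.lift_apply_of]
      rw [this, h1']
      simp [a]
    · show f yg = g yg
      simp only [g, MonoidHom.coe_mk, OneHom.coe_mk]
      have : e0 yg = Multiplicative.ofAdd (0 : ℤ) := by
        simp [he0, yg, FreeGroup.lift_apply_of]
      have h1' : e1 yg = Multiplicative.ofAdd (1 : ℤ) := by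
        simp [he1, yg, FreeGroup.lift_apply_of]
      rw [this, h1']
      simp [b]
  rw [hfg]
  show Multiplicative.ofAdd (a * Multiplicative.toAdd (e0 r) + b * Multiplicative.toAdd (e1 r)) = 1
  rw [h0, h1]
  simp

/-- An element with `y`-exponent sum zero lies in the normal closure of `x`. -/
lemma mem_normalClosure_xg (w : F2) (hB : expSum 1 w = 0) :
    w ∈ Subgroup.normalClosure {xg} := by
  set N := Subgroup.normalClosure ({xg} : Set F2) with hN
  set φ : F2 →* Multiplicative ℤ :=
    FreeGroup.lift fun j => Multiplicative.ofAdd (if j = 1 then (1 : ℤ) else 0) with hφ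
  have hxker : φ xg = 1 := by simp [hφ, xg, FreeGroup.lift_apply_of]
  have hNker : N ≤ φ.ker := by
    apply Subgroup.normalClosure_le_normal
    intro z hz
    rw [Set.mem_singleton_iff] at hz
    subst hz
    exact hxker
  let mk : F2 →* F2 ⧸ N := QuotientGroup.mk' N
  have hxN : xg ∈ N := Subgroup.subset_normalClosure rfl
  have hmkx : mk xg = 1 := (QuotientGroup.eq_one_iff _).mpr hxN
  have key : ∀ v : F2, mk v ∈ Subgroup.zpowers (mk yg) := by
    intro v
    induction v using FreeGroup.induction_on with
    | C1 => rw [map_one]; exact Subgroup.one_mem _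
    | of i =>
      fin_cases i
      · show mk xg ∈ _
        rw [hmkx]; exact Subgroup.one_mem _
      · exact Subgroup.mem_zpowers _
    | inv_of i hi => exact Subgroup.inv_mem _ hi
    | mul u v hu hv => rw [map_mul]; exact Subgroup.mul_mem _ hu hv
  obtain ⟨n, hn0⟩ := key w
  have hn : mk yg ^ n = mk w := hn0
  -- descend φ to the quotient
  let φbar : F2 ⧸ N →* Multiplicative ℤ := QuotientGroup.lift N φ hNker
  have hφw : φ w = 1 := by
    have : Multiplicative.toAdd (φ w) = 0 := hB
    simpa using this
  have hφy : φ yg = Multiplicative.ofAdd (1 : ℤ) := by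
    simp [hφ, yg, FreeGroup.lift_apply_of]
  have hbar : φbar (mk w) = 1 := by simpa [φbar, mk] using hφw
  have hbar' : φbar ((mk yg) ^ n) = Multiplicative.ofAdd (n : ℤ) := by
    rw [map_zpow]
    have : φbar (mk yg) = Multiplicative.ofAdd (1 : ℤ) := by simpa [φbar, mk] using hφy
    rw [this]
    simp [← ofAdd_zsmul]
  have hnz : n = 0 := by
    rw [hn] at hbar'
    rw [hbar] at hbar'
    simpa using hbar'.symm
  rw [hnz] at hn
  simp only [zpow_zero] at hn
  have : mk w = 1 := hn.symm
  exact (QuotientGroup.eq_one_iff _).mp this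

theorem mem_normalClosure_of_expSum_zero (r : F2)
    (hA : expSum 0 r = 0) (hB : expSum 1 r = 0) (p : F2) (hp : IsPrimitive p) :
    r ∈ Subgroup.normalClosure {p} := by
  obtain ⟨θ, hθ⟩ := hp
  set r' := θ.symm r with hr'
  have hA' : expSum 0 r' = 0 := by
    have := hom_eq_one_of_expSum_zero r hA hB
      ((FreeGroup.lift fun j => Multiplicative.ofAdd (if j = 0 then (1 : ℤ) else 0)).comp
        θ.symm.toMonoidHom)
    have : Multiplicative.toAdd
        ((FreeGroup.lift fun j => Multiplicative.ofAdd (if j = 0 then (1:ℤ) else 0)) r') = 0 := by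
      simpa [MonoidHom.comp_apply] using congrArg Multiplicative.toAdd this
    exact this
  have hB' : expSum 1 r' = 0 := by
    have := hom_eq_one_of_expSum_zero r hA hB
      ((FreeGroup.lift fun j => Multiplicative.ofAdd (if j = 1 then (1 : ℤ) else 0)).comp
        θ.symm.toMonoidHom)
    have : Multiplicative.toAdd
        ((FreeGroup.lift fun j => Multiplicative.ofAdd (if j = 1 then (1:ℤ) else 0)) r') = 0 := by
      simpa [MonoidHom.comp_apply] using congrArg Multiplicative.toAdd this
    exact this
  have hmem : r' ∈ Subgroup.normalClosure {xg} := mem_normalClosure_xg r' hB'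
  have hmap : (Subgroup.normalClosure {xg}).map θ.toMonoidHom
      = Subgroup.normalClosure {p} := by
    rw [Subgroup.map_normalClosure _ _ θ.surjective, Set.image_singleton]
    congr 1
    rw [Set.singleton_eq_singleton_iff]
    exact hθ
  rw [← hmap]
  exact ⟨r', hmem, by simp [hr']⟩
end

section
/- If φ is a basic automorphism of F(x,y) with abelianization matrix M(φ), and (U, V), (X, Y) are pairs of positive integers with U ≤ V and (U,V)·M(φ) = (X,Y), then U = min(Y mod X, X − (Y mod X)) and V = max(Y mod X, X − (Y mod X)). -/
/-- `b` is obtained from `a` by right multiplication by the abelianization matrix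
`[[1,n],[1,n+1]]` or `[[1,n+1],[1,n]]` of a basic automorphism. -/
def IsBasicMatrixStep (a b : ℤ × ℤ) : Prop :=
  ∃ n : ℕ, b = (a.1 + a.2, n * a.1 + (n + 1) * a.2) ∨
           b = (a.1 + a.2, (n + 1) * a.1 + n * a.2)

namespace IsBasicMatrixStep

variable {a b : ℤ × ℤ}

theorem fst_eq (h : IsBasicMatrixStep a b) : b.1 = a.1 + a.2 := by
  obtain ⟨n, rfl | rfl⟩ := h <;> rfl

theorem snd_emod_fst (h : IsBasicMatrixStep a b) :
    b.2 % b.1 = a.2 % b.1 ∨ b.2 % b.1 = a.1 % b.1 := by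
  obtain ⟨n, rfl | rfl⟩ := h
  · left
    calc (n * a.1 + (n + 1) * a.2) % (a.1 + a.2)
        = (a.2 + (a.1 + a.2) * n) % (a.1 + a.2) := by ring_nf
      _ = a.2 % (a.1 + a.2) := Int.add_mul_emod_self_left _ _ _
  · right
    calc ((n + 1) * a.1 + n * a.2) % (a.1 + a.2)
        = (a.1 + (a.1 + a.2) * n) % (a.1 + a.2) := by ring_nf
      _ = a.1 % (a.1 + a.2) := Int.add_mul_emod_self_left _ _ _

end IsBasicMatrixStep

theorem basic_step_inverse_general (U V X Y : ℤ) (hU : 0 < U) (hV : 0 < V) (hUV : U ≤ V)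
    (hstep : IsBasicMatrixStep (U, V) (X, Y)) :
    U = min (Y % X) (X - Y % X) ∧ V = max (Y % X) (X - Y % X) := by
  have hX : X = U + V := hstep.fst_eq
  have hV_lt : V < X := by omega
  have hU_lt : U < X := by omega
  rcases hstep.snd_emod_fst with hY | hY <;> dsimp only at hY
  · rw [hY, Int.emod_eq_of_lt hV.le hV_lt]
    omega
  · rw [hY, Int.emod_eq_of_lt hU.le hU_lt]
    omega

theorem basic_step_inverse (U V X Y : ℤ) (hU : 0 < U) (hV : 0 < V) (hUV : U ≤ V)
    (hX : 0 < X) (hY : 0 < Y) (hstep : IsBasicMatrixStep (U, V) (X, Y)) :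
    U = min (Y % X) (X - Y % X) ∧ V = max (Y % X) (X - Y % X) :=
  basic_step_inverse_general U V X Y hU hV hUV hstep
end
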